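/- Let (X_t) be a continuous-time Markov chain on ℤ^d whose heat kernel with respect to a speed measure ν (with ν ≥ c > 0) satisfies the lower Gaussian bound q_t(x,y) ≥ (c/t^{d/2})·exp(−c'|x−y|²/t) for t ≥ 1 ∨ c̃|x−y|. Fix x₀ and radii so that A = B(x₀, K). Then there is a constant c̄ > 0 such that for all x ∈ A and the annulus 𝒜 = B(x₀,40K)∖B(x₀,20K): P_x[X_{K²} ∈ 𝒜] ≥ c̄. Consequently, by iterating the Markov property at times jK², j = 1,…,⌊T/K²⌋, one gets P_x[T_A > T] ≤ (1−c̄)^{⌊T/K²⌋} for the exit time T_A of A; in particular for T = K^{2α'} with α' > 1, P_x[T_A > K^{2α'}] ≤ exp(−c K^{2(α'−1)}). -/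

import Mathlib

/-!
Starting from a point of `A = B(x₀, K)`, every lattice point of the annulus
`B(x₀, 40K) ∖ B(x₀, 20K)` lies within distance `41K` of the walker, so the Gaussian lower bound
gives it mass `≳ K^{-d}` at time `K²` (the diffusive scaling makes the Gaussian factor a
constant). The annulus contains a box with `≳ K^d` lattice points, so in each step the chain jumps
into the annulus, hence out of `A`, with probability at least `c̄`. By the Markov property at the
times `jK²`, staying in `A` for `n` steps has probability at most `(1 - c̄)^n ≤ exp(-c̄ n)`.
-/

open MeasureTheory ProbabilityTheory ENNReal

noncomputable def eudist (d : ℕ) (x y : Fin d → ℤ) : ℝ :=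
  Real.sqrt (∑ i, ((x i : ℝ) - (y i : ℝ)) ^ 2)

/-- Probability that the discrete skeleton (with transition kernel `κ`) stays
in the set `A` for `n` consecutive steps. -/
noncomputable def stayProb {d : ℕ} (κ : Kernel (Fin d → ℤ) (Fin d → ℤ))
    (A : Set (Fin d → ℤ)) : ℕ → (Fin d → ℤ) → ENNReal
  | 0, _ => 1
  | n + 1, x => ∫⁻ y in A, stayProb κ A n y ∂(κ x)

section Eudist

variable {d : ℕ}

noncomputable def latticeToEuclidean (x : Fin d → ℤ) : EuclideanSpace ℝ (Fin d) :=
  WithLp.toLp 2 fun i => (x i : ℝ)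

lemma eudist_eq_dist (x y : Fin d → ℤ) :
    eudist d x y = dist (latticeToEuclidean x) (latticeToEuclidean y) := by
  simp only [eudist, EuclideanSpace.dist_eq, latticeToEuclidean, Real.dist_eq, sq_abs]

lemma eudist_nonneg (x y : Fin d → ℤ) : 0 ≤ eudist d x y :=
  Real.sqrt_nonneg _

lemma eudist_comm (x y : Fin d → ℤ) : eudist d x y = eudist d y x := by
  rw [eudist_eq_dist, eudist_eq_dist, dist_comm]

lemma eudist_triangle (x y z : Fin d → ℤ) : eudist d x z ≤ eudist d x y + eudist d y z := by
  simpa only [eudist_eq_dist] using dist_triangle _ _ _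

lemma eudist_add_right (x v : Fin d → ℤ) :
    eudist d x (x + v) = Real.sqrt (∑ i, (v i : ℝ) ^ 2) := by
  simp only [eudist, Pi.add_apply, Int.cast_add, sub_add_cancel_left, neg_sq]

end Eudist

section AnnulusBox

variable {n : ℕ}

/-- The offsets `y - x₀` of a box of `≳ K^(n+1)` lattice points `y` in the annulus
`20K ≤ |y - x₀| ≤ 40K`. -/
noncomputable def annulusBox (n K : ℕ) : Finset (Fin (n + 1) → ℤ) :=
  Fintype.piFinset fun i =>
    if i = 0 then Finset.Icc (20 * K : ℤ) (21 * K) else Finset.Icc 0 ((K / (n + 1) : ℕ) : ℤ)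

lemma sum_sq_mem_annulusBox {K : ℕ} {v : Fin (n + 1) → ℤ} (hv : v ∈ annulusBox n K) :
    (20 * (K : ℝ)) ^ 2 ≤ ∑ i, (v i : ℝ) ^ 2 ∧ ∑ i, (v i : ℝ) ^ 2 ≤ (40 * (K : ℝ)) ^ 2 := by
  simp only [annulusBox, Fintype.mem_piFinset] at hv
  have hfirst : 20 * (K : ℝ) ≤ v 0 ∧ (v 0 : ℝ) ≤ 21 * K := by
    have := hv 0
    simp only [if_pos, Finset.mem_Icc] at this
    exact_mod_cast this
  have hrest : ∀ i : Fin n, 0 ≤ (v i.succ : ℝ) ∧ (v i.succ : ℝ) ≤ K / (n + 1) := by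
    intro i
    have := hv i.succ
    simp only [Fin.succ_ne_zero, if_false, Finset.mem_Icc] at this
    have hle : (v i.succ : ℝ) ≤ (((K / (n + 1) : ℕ) : ℤ) : ℝ) := Int.cast_le.mpr this.2
    rw [Int.cast_natCast] at hle
    exact ⟨by exact_mod_cast this.1, hle.trans (by exact_mod_cast Nat.cast_div_le)⟩
  have hrest_sum : ∑ i : Fin n, (v i.succ : ℝ) ^ 2 ≤ (K : ℝ) ^ 2 :=
    calc ∑ i : Fin n, (v i.succ : ℝ) ^ 2 ≤ ∑ _i : Fin n, ((K : ℝ) / (n + 1)) ^ 2 :=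
          Finset.sum_le_sum fun i _ => pow_le_pow_left₀ (hrest i).1 (hrest i).2 2
      _ = n * ((K : ℝ) / (n + 1)) ^ 2 := by simp
      _ ≤ ((n : ℝ) + 1) ^ 2 * ((K : ℝ) / (n + 1)) ^ 2 := by gcongr; nlinarith
      _ = (K : ℝ) ^ 2 := by field_simp
  have hrest_nonneg : 0 ≤ ∑ i : Fin n, (v i.succ : ℝ) ^ 2 :=
    Finset.sum_nonneg fun i _ => sq_nonneg _
  rw [Fin.sum_univ_succ]
  constructor <;> nlinarith

lemma card_annulusBox_ge (K : ℕ) :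
    (K : ℝ) * ((K : ℝ) / (n + 1)) ^ n ≤ (annulusBox n K).card := by
  have hfloor : (K : ℝ) / (n + 1) ≤ ((K / (n + 1) : ℕ) : ℝ) + 1 := by
    have := Nat.lt_floor_add_one ((K : ℝ) / (n + 1))
    rw [show ((n : ℝ) + 1) = ((n + 1 : ℕ) : ℝ) by push_cast; ring, Nat.floor_div_eq_div] at this
    push_cast at this ⊢
    exact this.le
  rw [annulusBox, Fintype.card_piFinset, Fin.prod_univ_succ]
  simp only [if_pos, Fin.succ_ne_zero, if_false, Int.card_Icc, Finset.prod_const, Finset.card_univ,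
    Fintype.card_fin]
  generalize K / (n + 1) = m at hfloor ⊢
  rw [show (21 * (K : ℤ) + 1 - 20 * K).toNat = K + 1 by omega,
    show ((m : ℤ) + 1 - 0).toNat = m + 1 by omega]
  push_cast
  gcongr
  linarith

end AnnulusBox

lemma card_mul_le_measure {α : Type*} [MeasurableSpace α] [MeasurableSingletonClass α]
    (μ : Measure α) (s : Finset α) {p : ℝ≥0∞} (h : ∀ y ∈ s, p ≤ μ {y}) : s.card * p ≤ μ s := by
  calc s.card * p = ∑ _y ∈ s, p := by rw [Finset.sum_const, nsmul_eq_mul]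
    _ ≤ ∑ y ∈ s, μ {y} := Finset.sum_le_sum h
    _ = μ s := sum_measure_singleton

lemma measure_le_one_sub_of_disjoint {α : Type*} [MeasurableSpace α] (μ : Measure α)
    [IsProbabilityMeasure μ] {A S : Set α} (hS : MeasurableSet S) (hAS : Disjoint A S) :
    μ A ≤ 1 - μ S :=
  (measure_mono hAS.subset_compl_right).trans_eq (prob_compl_eq_one_sub hS)

lemma sq_rpow_half {x : ℝ} (hx : 0 ≤ x) (d : ℕ) : (x ^ 2) ^ ((d : ℝ) / 2) = x ^ d := by
  rw [← Real.rpow_natCast x 2, ← Real.rpow_mul hx, Nat.cast_two, mul_div_cancel₀ _ two_ne_zero,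
    Real.rpow_natCast]

lemma one_sub_pow_le_exp_neg_mul {a : ℝ} (ha : a ≤ 1) (n : ℕ) :
    (1 - a) ^ n ≤ Real.exp (-a * n) := by
  calc (1 - a) ^ n ≤ Real.exp (-a) ^ n :=
        pow_le_pow_left₀ (by linarith) (Real.one_sub_le_exp_neg a) n
    _ = Real.exp (-a * n) := by rw [← Real.exp_nat_mul, mul_comm]

/-- The lower Gaussian bound on the transition kernel `κ` of the chain observed at time `K²`. -/
def GaussianLowerBound (d : ℕ) (κ : Kernel (Fin d → ℤ) (Fin d → ℤ)) (ν : (Fin d → ℤ) → ℝ)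
    (c c' ctilde : ℝ) (K : ℕ) : Prop :=
  ∀ x y : Fin d → ℤ, ctilde * eudist d x y ≤ (K : ℝ) ^ 2 →
    ENNReal.ofReal (c / ((K : ℝ) ^ 2) ^ ((d : ℝ) / 2) *
      Real.exp (-c' * eudist d x y ^ 2 / (K : ℝ) ^ 2) * ν y) ≤ κ x {y}

section GaussianLowerBound

variable {d : ℕ} {κ : Kernel (Fin d → ℤ) (Fin d → ℤ)} {ν : (Fin d → ℤ) → ℝ}
  {c c' ctilde cν : ℝ} {K : ℕ}

lemma GaussianLowerBound.ofReal_le_singleton (hheat : GaussianLowerBound d κ ν c c' ctilde K)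
    (hc : 0 ≤ c) (hc' : 0 ≤ c') (hct : 0 ≤ ctilde) (hcν : 0 ≤ cν) (hν : ∀ y, cν ≤ ν y)
    (hK : 0 < K) {R : ℝ} (hRK : R * ctilde ≤ K) {x y : Fin d → ℤ} (hxy : eudist d x y ≤ R * K) :
    ENNReal.ofReal (c / (K : ℝ) ^ d * Real.exp (-(c' * R ^ 2)) * cν) ≤ κ x {y} := by
  have hKR : (0 : ℝ) < K := by exact_mod_cast hK
  have hnear : ctilde * eudist d x y ≤ (K : ℝ) ^ 2 := by
    calc ctilde * eudist d x y ≤ ctilde * (R * K) := by gcongr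
      _ = (R * ctilde) * K := by ring
      _ ≤ K * K := by gcongr
      _ = (K : ℝ) ^ 2 := (sq _).symm
  refine le_trans (ENNReal.ofReal_le_ofReal ?_) (hheat x y hnear)
  have hsq : eudist d x y ^ 2 ≤ R ^ 2 * (K : ℝ) ^ 2 := by
    rw [← mul_pow]
    exact pow_le_pow_left₀ (eudist_nonneg x y) hxy 2
  have hgauss : -(c' * R ^ 2) ≤ -c' * eudist d x y ^ 2 / (K : ℝ) ^ 2 := by
    rw [le_div_iff₀ (by positivity)]
    nlinarith
  rw [sq_rpow_half hKR.le]
  gcongr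
  exact hν y

end GaussianLowerBound

lemma ofReal_le_kernel_annulus {n : ℕ} {κ : Kernel (Fin (n + 1) → ℤ) (Fin (n + 1) → ℤ)}
    {ν : (Fin (n + 1) → ℤ) → ℝ} {c c' ctilde cν : ℝ} {K : ℕ}
    (hheat : GaussianLowerBound (n + 1) κ ν c c' ctilde K)
    (hc : 0 ≤ c) (hc' : 0 ≤ c') (hct : 0 ≤ ctilde) (hcν : 0 ≤ cν) (hν : ∀ y, cν ≤ ν y)
    (hK : 0 < K) (hKct : 41 * ctilde ≤ K) {x₀ x : Fin (n + 1) → ℤ} (hx : eudist (n + 1) x₀ x ≤ K) :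
    ENNReal.ofReal (c * Real.exp (-(c' * 41 ^ 2)) * cν / (n + 1) ^ n) ≤
      κ x {y | 20 * (K : ℝ) ≤ eudist (n + 1) x₀ y ∧ eudist (n + 1) x₀ y ≤ 40 * K} := by
  set F := (annulusBox n K).map (addLeftEmbedding x₀)
  have hF : ∀ y ∈ F, 20 * (K : ℝ) ≤ eudist (n + 1) x₀ y ∧ eudist (n + 1) x₀ y ≤ 40 * K := by
    simp only [F, Finset.mem_map, addLeftEmbedding_apply, forall_exists_index, and_imp]
    rintro _ v hv rfl
    obtain ⟨hlo, hhi⟩ := sum_sq_mem_annulusBox hv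
    rw [eudist_add_right]
    exact ⟨(Real.le_sqrt (by positivity) (by positivity)).mpr hlo,
      (Real.sqrt_le_left (by positivity)).mpr hhi⟩
  set p := c / (K : ℝ) ^ (n + 1) * Real.exp (-(c' * 41 ^ 2)) * cν
  have hsingle : ∀ y ∈ F, ENNReal.ofReal p ≤ κ x {y} := by
    intro y hy
    refine hheat.ofReal_le_singleton hc hc' hct hcν hν hK hKct ?_
    have := eudist_triangle x x₀ y
    rw [eudist_comm x x₀] at this
    linarith [(hF y hy).2]
  have hcard : c * Real.exp (-(c' * 41 ^ 2)) * cν / (n + 1) ^ n ≤ F.card * p := by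
    rw [Finset.card_map]
    calc c * Real.exp (-(c' * 41 ^ 2)) * cν / (n + 1) ^ n
        = (K : ℝ) * ((K : ℝ) / (n + 1)) ^ n * p := by
          simp only [p]
          rw [div_pow]
          field_simp
          ring
      _ ≤ (annulusBox n K).card * p := by
          gcongr
          exact card_annulusBox_ge K
  calc ENNReal.ofReal (c * Real.exp (-(c' * 41 ^ 2)) * cν / (n + 1) ^ n)
      ≤ ENNReal.ofReal (F.card * p) := ENNReal.ofReal_le_ofReal hcard
    _ = F.card * ENNReal.ofReal p := by
        rw [ENNReal.ofReal_mul (Nat.cast_nonneg _), ENNReal.ofReal_natCast]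
    _ ≤ κ x F := card_mul_le_measure _ F hsingle
    _ ≤ _ := measure_mono fun y hy => hF y hy

lemma stayProb_le_pow {d : ℕ} {κ : Kernel (Fin d → ℤ) (Fin d → ℤ)} {A : Set (Fin d → ℤ)}
    {r : ℝ≥0∞} (hA : ∀ x ∈ A, κ x A ≤ r) (n : ℕ) : ∀ x ∈ A, stayProb κ A n x ≤ r ^ n := by
  induction n with
  | zero => simp [stayProb]
  | succ n ih =>
    intro x hx
    calc stayProb κ A (n + 1) x = ∫⁻ y in A, stayProb κ A n y ∂(κ x) := rfl
      _ ≤ ∫⁻ _y in A, r ^ n ∂(κ x) := setLIntegral_mono' MeasurableSet.of_discrete ih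
      _ = r ^ n * κ x A := setLIntegral_const _ _
      _ ≤ r ^ n * r := by gcongr; exact hA x hx
      _ = r ^ (n + 1) := (pow_succ r n).symm

/-- exit-time deviation estimate: for a Markov chain on `ℤ^d`
whose one-step (time `K²`) kernel admits a lower Gaussian heat kernel bound
with speed measure `ν ≥ cν > 0`, there is `c̄ ∈ (0,1)` such that, for `K`
large: (i) from any `x ∈ A = B(x₀,K)` the chain lands in the annulus
`B(x₀,40K)∖B(x₀,20K)` with probability at least `c̄`; (ii) the probability of
staying in `A` for `n` steps is at most `(1−c̄)^n`; (iii) with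
`n = ⌊K^{2α'}/K²⌋` steps (`α' > 1`) this is at most `exp(−c̄·n)`. -/
theorem exit_time_deviation
    (d : ℕ) (hd : 3 ≤ d)
    (c c' ctilde cν : ℝ) (hc : 0 < c) (hc' : 0 < c') (hct : 0 < ctilde)
    (hcν : 0 < cν) :
    ∃ cbar : ℝ, 0 < cbar ∧ cbar < 1 ∧ ∃ K₀ : ℕ, ∀ K : ℕ, K₀ ≤ K →
      ∀ (x₀ : Fin d → ℤ) (κ : Kernel (Fin d → ℤ) (Fin d → ℤ)),
        IsMarkovKernel κ →
      ∀ ν : (Fin d → ℤ) → ℝ, (∀ y, cν ≤ ν y) →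
      (∀ x y : Fin d → ℤ, ctilde * eudist d x y ≤ (K : ℝ) ^ 2 →
        ENNReal.ofReal (c / ((K : ℝ) ^ 2) ^ ((d : ℝ) / 2) *
          Real.exp (-c' * eudist d x y ^ 2 / (K : ℝ) ^ 2) * ν y)
          ≤ κ x {y}) →
      (∀ x : Fin d → ℤ, eudist d x₀ x ≤ K →
        ENNReal.ofReal cbar
          ≤ κ x {y | 20 * (K : ℝ) ≤ eudist d x₀ y ∧ eudist d x₀ y ≤ 40 * K}) ∧
      (∀ n : ℕ, ∀ x : Fin d → ℤ, eudist d x₀ x ≤ K →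
        stayProb κ {z | eudist d x₀ z ≤ K} n x
          ≤ ENNReal.ofReal ((1 - cbar) ^ n)) ∧
      (∀ α' : ℝ, 1 < α' → ∀ x : Fin d → ℤ, eudist d x₀ x ≤ K →
        stayProb κ {z | eudist d x₀ z ≤ K}
            ⌊(K : ℝ) ^ (2 * α') / (K : ℝ) ^ 2⌋₊ x
          ≤ ENNReal.ofReal (Real.exp
              (-cbar * (⌊(K : ℝ) ^ (2 * α') / (K : ℝ) ^ 2⌋₊ : ℝ)))) := by
  obtain ⟨n, rfl⟩ : ∃ n, d = n + 1 := ⟨d - 1, by omega⟩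
  set cbar := min (c * Real.exp (-(c' * 41 ^ 2)) * cν / (n + 1) ^ n) (1 / 2)
  have hcbar_pos : 0 < cbar := lt_min (by positivity) one_half_pos
  have hcbar_lt_one : cbar < 1 := (min_le_right _ _).trans_lt one_half_lt_one
  refine ⟨cbar, hcbar_pos, hcbar_lt_one, max 1 ⌈41 * ctilde⌉₊,
    fun K hK x₀ κ _ ν hν hheat => ?_⟩
  have hK_pos : 0 < K := (le_max_left _ _).trans hK
  have hK_ct : 41 * ctilde ≤ K := Nat.ceil_le.mp ((le_max_right _ _).trans hK)
  set A := {z | eudist (n + 1) x₀ z ≤ K}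
  set S := {y | 20 * (K : ℝ) ≤ eudist (n + 1) x₀ y ∧ eudist (n + 1) x₀ y ≤ 40 * K}
  have henter : ∀ x ∈ A, ENNReal.ofReal cbar ≤ κ x S := fun x hx =>
    (ENNReal.ofReal_le_ofReal (min_le_left _ _)).trans
      (ofReal_le_kernel_annulus hheat hc.le hc'.le hct.le hcν.le hν hK_pos hK_ct hx)
  have hAS : Disjoint A S := Set.disjoint_left.mpr fun z (hzA : eudist _ x₀ z ≤ K) hzS => by
    have : (0 : ℝ) < K := by exact_mod_cast hK_pos
    linarith [hzS.1]
  have hstep : ∀ x ∈ A, κ x A ≤ ENNReal.ofReal (1 - cbar) := fun x hx =>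
    calc κ x A ≤ 1 - κ x S := measure_le_one_sub_of_disjoint _ .of_discrete hAS
      _ ≤ 1 - ENNReal.ofReal cbar := tsub_le_tsub_left (henter x hx) 1
      _ = ENNReal.ofReal (1 - cbar) := by rw [ENNReal.ofReal_sub _ hcbar_pos.le, ofReal_one]
  have hstay : ∀ m, ∀ x ∈ A, stayProb κ A m x ≤ ENNReal.ofReal ((1 - cbar) ^ m) :=
    fun m x hx => by
      rw [ENNReal.ofReal_pow (by linarith)]
      exact stayProb_le_pow hstep m x hx
  exact ⟨henter, hstay, fun α' _ x hx => (hstay _ x hx).trans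
    (ENNReal.ofReal_le_ofReal (one_sub_pow_le_exp_neg_mul hcbar_lt_one.le _))⟩
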